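/- Suppose R'_j[i] = ∅ and R_i[j] ≠ ∅, and let ℓ_{i,j} be the first point of R_i[j] along the oriented edge w_j w_{j+1}. Then the first point ℓ_{i+1,j} of R_{i+1}[j] (if R_{i+1}[j] ≠ ∅) does not lie in front of ℓ_{i,j}; i.e., ℓ_{i,j} precedes or equals ℓ_{i+1,j} along w_j w_{j+1}. -/
import Mathlib


open scoped RealInnerProductSpace

/-- Piecewise-linear (polygonal) curve with `n` edges and vertices `v 0, ..., v n`,
parameterized on `[0,1]`. -/
noncomputable def polyline {E : Type*} [NormedAddCommGroup E] [NormedSpace ℝ E]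
    (n : ℕ) (v : ℕ → E) (s : ℝ) : E :=
  let u : ℝ := s * n
  let i : ℕ := min (n - 1) (⌊u⌋.toNat)
  (1 - (u - i)) • v i + (u - i) • v (i + 1)

/-- A reparameterization of `[0,1]`: continuous, monotone, fixing the endpoints. -/
def IsReparam (φ : ℝ → ℝ) : Prop :=
  Continuous φ ∧ Monotone φ ∧ φ 0 = 0 ∧ φ 1 = 1

/-- The Fréchet distance between two curves `f g : ℝ → E` (regarded as parameterized
on `[0,1]`): the infimum of the bounds `δ` achieved by some pair of matched
reparameterizations. -/
noncomputable def frechetDist {E : Type*} [NormedAddCommGroup E] [NormedSpace ℝ E]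
    (f g : ℝ → E) : ℝ :=
  sInf {δ : ℝ | 0 ≤ δ ∧ ∃ φ ψ : ℝ → ℝ, IsReparam φ ∧ IsReparam ψ ∧
    ∀ t ∈ Set.Icc (0:ℝ) 1, dist (f (φ t)) (g (ψ t)) ≤ δ}

/-- Vertices of the subcurve `τ[v 0, x]` where `x` lies on the edge from `v i` to
`v (i+1)`: the vertices `v 0, ..., v i` followed by `x`. -/
def subVert {E : Type*} (v : ℕ → E) (i : ℕ) (x : E) : ℕ → E :=
  fun k => if k ≤ i then v k else x

section Aux
variable {E : Type*} [NormedAddCommGroup E] [NormedSpace ℝ E]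

lemma polyline_def (n : ℕ) (v : ℕ → E) (s : ℝ) :
    polyline n v s = (1 - (s * n - (min (n-1) (⌊s * (n:ℝ)⌋.toNat) : ℕ))) • v (min (n-1) ⌊s * (n:ℝ)⌋.toNat)
      + (s * n - (min (n-1) (⌊s * (n:ℝ)⌋.toNat) : ℕ)) • v (min (n-1) ⌊s * (n:ℝ)⌋.toNat + 1) := rfl

lemma polyline_eq_of (n k : ℕ) (hk : k + 1 ≤ n) (v : ℕ → E) (s : ℝ)
    (h1 : (k:ℝ) ≤ s * n) (h2 : s * n ≤ k + 1) :
    polyline n v s = (1 - (s*n - k)) • v k + (s*n - k) • v (k+1) := by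
  rw [polyline_def]
  rcases lt_or_eq_of_le h2 with h2' | h2'
  · have hfl : ⌊s * (n:ℝ)⌋ = (k : ℤ) := by
      rw [Int.floor_eq_iff]
      constructor
      · exact_mod_cast h1
      · push_cast; exact h2'
    have hmin : min (n-1) (⌊s * (n:ℝ)⌋.toNat) = k := by
      rw [hfl]; simp only [Int.toNat_natCast]
      exact min_eq_right (Nat.le_sub_one_of_lt hk)
    rw [hmin]
  · have hfl : ⌊s * (n:ℝ)⌋ = ((k:ℤ) + 1) := by
      rw [Int.floor_eq_iff]
      push_cast
      constructor
      · linarith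
      · linarith
    have htn : ⌊s * (n:ℝ)⌋.toNat = k + 1 := by rw [hfl]; exact_mod_cast Int.toNat_natCast (k+1)
    rcases lt_or_eq_of_le hk with hlt | heq
    · have hmin : min (n-1) (⌊s * (n:ℝ)⌋.toNat) = k + 1 := by
        rw [htn]; exact min_eq_right (Nat.le_sub_one_of_lt hlt)
      rw [hmin, h2']
      push_cast
      simp
    · have hn1 : n - 1 = k := by omega
      have hmin : min (n-1) (⌊s * (n:ℝ)⌋.toNat) = k := by
        rw [htn, hn1]; exact min_eq_left (by omega)
      rw [hmin]

lemma polyline_at_zero (n : ℕ) (v : ℕ → E) : polyline n v 0 = v 0 := by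
  rw [polyline_def]
  norm_num

lemma polyline_zero_edges (v : ℕ → E) (s : ℝ) : polyline 0 v s = v 0 := by
  rw [polyline_def]
  norm_num

lemma exists_k (m : ℕ) (hm : 1 ≤ m) (u' : ℝ) (h0 : 0 ≤ u') (h1 : u' ≤ m) :
    ∃ k : ℕ, k + 1 ≤ m ∧ (k:ℝ) ≤ u' ∧ u' ≤ k + 1 := by
  have hfl0 : (0:ℤ) ≤ ⌊u'⌋ := Int.floor_nonneg.mpr h0
  have hreal : ((⌊u'⌋.toNat : ℕ) : ℝ) = ((⌊u'⌋ : ℤ) : ℝ) := by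
    exact_mod_cast congrArg (fun z : ℤ => (z:ℝ)) (Int.toNat_of_nonneg hfl0)
  by_cases h : ⌊u'⌋.toNat + 1 ≤ m
  · refine ⟨⌊u'⌋.toNat, h, ?_, ?_⟩
    · rw [hreal]; exact Int.floor_le u'
    · rw [hreal]; exact (Int.lt_floor_add_one u').le
  · push_neg at h
    have hmt : m ≤ ⌊u'⌋.toNat := by omega
    have h2 : (m:ℝ) ≤ u' := by
      have hh : ((m:ℕ):ℝ) ≤ ((⌊u'⌋.toNat : ℕ):ℝ) := by exact_mod_cast hmt
      rw [hreal] at hh; exact hh.trans (Int.floor_le u')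
    have hc : ((m-1:ℕ):ℝ) = (m:ℝ) - 1 := by
      rw [Nat.cast_sub hm]; norm_num
    exact ⟨m-1, by omega, by rw [hc]; linarith, by rw [hc]; linarith⟩

lemma polyline_prefix_congr (m : ℕ) (W W' : ℕ → E) (hW : ∀ k, k ≤ m → W k = W' k)
    (u : ℝ) (h0 : 0 ≤ u) (h1 : u * ((m:ℝ)+1) ≤ m) :
    polyline (m+1) W u = polyline (m+1) W' u := by
  rcases Nat.eq_zero_or_pos m with hm | hm
  · subst hm
    have hu : u = 0 := by push_cast at h1; linarith
    subst hu
    rw [polyline_at_zero, polyline_at_zero, hW 0 le_rfl]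
  · obtain ⟨k, hk, hk1, hk2⟩ := exists_k m hm (u * ((m:ℝ)+1)) (by nlinarith) h1
    have hcast : u * ((m+1 : ℕ):ℝ) = u * ((m:ℝ)+1) := by push_cast; ring
    rw [polyline_eq_of (m+1) k (by omega) W u (by rw [hcast]; exact hk1) (by rw [hcast]; exact hk2),
        polyline_eq_of (m+1) k (by omega) W' u (by rw [hcast]; exact hk1) (by rw [hcast]; exact hk2),
        hW k (by omega), hW (k+1) (by omega)]

lemma polyline_prefix_rescale (m : ℕ) (hm : 1 ≤ m) (W w' : ℕ → E) (hW : ∀ k, k ≤ m → W k = w' k)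
    (u : ℝ) (h0 : 0 ≤ u) (h1 : u * ((m:ℝ)+1) ≤ m) :
    polyline (m+1) W u = polyline m w' (u * ((m:ℝ)+1) / m) := by
  have hmne : (m:ℝ) ≠ 0 := by positivity
  obtain ⟨k, hk, hk1, hk2⟩ := exists_k m hm (u * ((m:ℝ)+1)) (by nlinarith) h1
  have hcast : u * ((m+1 : ℕ):ℝ) = u * ((m:ℝ)+1) := by push_cast; ring
  have hcast2 : u * ((m:ℝ)+1) / m * (m:ℝ) = u * ((m:ℝ)+1) := by field_simp
  rw [polyline_eq_of (m+1) k (by omega) W u (by rw [hcast]; exact hk1) (by rw [hcast]; exact hk2),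
      polyline_eq_of m k hk w' _ (by rw [hcast2]; exact hk1) (by rw [hcast2]; exact hk2),
      hW k (by omega), hW (k+1) (by omega), hcast, hcast2]

lemma polyline_last (m : ℕ) (W : ℕ → E) (u : ℝ) (h0 : (m:ℝ) ≤ u * ((m:ℝ)+1)) (h1 : u * ((m:ℝ)+1) ≤ (m:ℝ)+1) :
    polyline (m+1) W u = (1 - (u*((m:ℝ)+1) - m)) • W m + (u*((m:ℝ)+1) - m) • W (m+1) := by
  have hcast : u * ((m+1 : ℕ):ℝ) = u * ((m:ℝ)+1) := by push_cast; ring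
  rw [polyline_eq_of (m+1) m le_rfl W u (by rw [hcast]; exact h0) (by rw [hcast]; linarith), hcast]

lemma subVert_le (v : ℕ → E) (i : ℕ) (x : E) (k : ℕ) (h : k ≤ i) : subVert v i x k = v k := if_pos h

lemma subVert_last (v : ℕ → E) (i : ℕ) (x : E) : subVert v i x (i+1) = x := if_neg (by omega)

lemma polyline_lastVertex_dist (m : ℕ) (w : ℕ → E) (y₁ y₂ : E) (u : ℝ) (h0 : 0 ≤ u) (h1 : u ≤ 1) :
    dist (polyline (m+1) (subVert w m y₁) u) (polyline (m+1) (subVert w m y₂) u) ≤ dist y₁ y₂ := by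
  by_cases h : u * ((m:ℝ)+1) ≤ m
  · rw [polyline_prefix_congr m (subVert w m y₁) (subVert w m y₂)
      (fun k hk => by rw [subVert_le _ _ _ _ hk, subVert_le _ _ _ _ hk]) u h0 h]
    simp [dist_nonneg]
  · push_neg at h
    have h1' : u * ((m:ℝ)+1) ≤ (m:ℝ)+1 := by nlinarith
    rw [polyline_last m _ u h.le h1', polyline_last m _ u h.le h1',
        subVert_le _ _ _ _ le_rfl, subVert_le _ _ _ _ le_rfl, subVert_last, subVert_last]
    rw [dist_add_left, dist_smul₀]
    have hc1 : u * ((m:ℝ)+1) - m ≤ 1 := by linarith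
    have hc0 : (0:ℝ) ≤ u * ((m:ℝ)+1) - m := by linarith
    rw [Real.norm_eq_abs, abs_of_nonneg hc0]
    nlinarith [dist_nonneg (x := y₁) (y := y₂)]

lemma polyline_norm_le (n : ℕ) (v : ℕ → E) (s : ℝ) (h0 : 0 ≤ s) (h1 : s ≤ 1) :
    ‖polyline n v s‖ ≤ ∑ k ∈ Finset.range (n+1), ‖v k‖ := by
  rcases Nat.eq_zero_or_pos n with hn | hn
  · subst hn
    rw [polyline_zero_edges]
    exact Finset.single_le_sum (f := fun k => ‖v k‖) (fun k _ => norm_nonneg _) (by simp)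
  · obtain ⟨k, hk, hk1, hk2⟩ := exists_k n hn (s * (n:ℝ)) (by positivity) (by nlinarith)
    rw [polyline_eq_of n k hk v s hk1 hk2]
    have h2 : ‖(1 - (s*n - k)) • v k + (s*n - k) • v (k+1)‖ ≤ ‖v k‖ + ‖v (k+1)‖ := by
      refine (norm_add_le _ _).trans ?_
      rw [norm_smul, norm_smul, Real.norm_eq_abs, Real.norm_eq_abs,
          abs_of_nonneg (by linarith), abs_of_nonneg (by linarith)]
      nlinarith [norm_nonneg (v k), norm_nonneg (v (k+1))]
    refine h2.trans ?_
    have : ({k, k+1} : Finset ℕ) ⊆ Finset.range (n+1) := by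
      intro a ha; simp at ha; rcases ha with h | h <;> simp [Finset.mem_range] <;> omega
    calc ‖v k‖ + ‖v (k+1)‖ = ∑ a ∈ ({k, k+1} : Finset ℕ), ‖v a‖ := by
          rw [Finset.sum_pair (by omega)]
      _ ≤ _ := Finset.sum_le_sum_of_subset_of_nonneg this (fun a _ _ => norm_nonneg _)

-- Matching framework

def Matches (f g : ℝ → E) (δ : ℝ) : Prop :=
  ∃ φ ψ : ℝ → ℝ, IsReparam φ ∧ IsReparam ψ ∧
    ∀ s ∈ Set.Icc (0:ℝ) 1, dist (f (φ s)) (g (ψ s)) ≤ δ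

lemma frechetDist_eq (f g : ℝ → E) :
    frechetDist f g = sInf {δ : ℝ | 0 ≤ δ ∧ Matches f g δ} := rfl

lemma isReparam_id : IsReparam (id : ℝ → ℝ) := ⟨continuous_id, monotone_id, rfl, rfl⟩

lemma IsReparam.mem_Icc {φ : ℝ → ℝ} (h : IsReparam φ) {s : ℝ} (hs : s ∈ Set.Icc (0:ℝ) 1) :
    φ s ∈ Set.Icc (0:ℝ) 1 :=
  ⟨h.2.2.1 ▸ h.2.1 hs.1, h.2.2.2 ▸ h.2.1 hs.2⟩

lemma Matches.mono {f g : ℝ → E} {δ₁ δ₂ : ℝ} (h : Matches f g δ₁) (hle : δ₁ ≤ δ₂) :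
    Matches f g δ₂ := by
  obtain ⟨φ, ψ, h1, h2, h3⟩ := h
  exact ⟨φ, ψ, h1, h2, fun s hs => (h3 s hs).trans hle⟩

lemma Matches.comm {f g : ℝ → E} {δ : ℝ} (h : Matches f g δ) : Matches g f δ := by
  obtain ⟨φ, ψ, h1, h2, h3⟩ := h
  exact ⟨ψ, φ, h2, h1, fun s hs => by rw [dist_comm]; exact h3 s hs⟩

lemma fd_comm (f g : ℝ → E) : frechetDist f g = frechetDist g f := by
  rw [frechetDist_eq, frechetDist_eq]
  congr 1
  ext b
  exact ⟨fun ⟨h0, h⟩ => ⟨h0, h.comm⟩, fun ⟨h0, h⟩ => ⟨h0, h.comm⟩⟩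

lemma fd_le_of_matches {f g : ℝ → E} {δ : ℝ} (h : Matches f g δ) (hδ : 0 ≤ δ) :
    frechetDist f g ≤ δ := by
  rw [frechetDist_eq]
  exact csInf_le ⟨0, fun b hb => hb.1⟩ ⟨hδ, h⟩

lemma fd_nonneg {f g : ℝ → E} (h : ∃ C, 0 ≤ C ∧ Matches f g C) : 0 ≤ frechetDist f g := by
  rw [frechetDist_eq]
  exact le_csInf ⟨h.choose, h.choose_spec⟩ (fun b hb => hb.1)

lemma matches_of_fd_le {f g : ℝ → E} {δ ε : ℝ} (hC : ∃ C, 0 ≤ C ∧ Matches f g C)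
    (h : frechetDist f g ≤ δ) (hε : 0 < ε) : Matches f g (δ + ε) := by
  rw [frechetDist_eq] at h
  have hlt : sInf {δ : ℝ | 0 ≤ δ ∧ Matches f g δ} < δ + ε := lt_of_le_of_lt h (by linarith)
  obtain ⟨b, hb, hblt⟩ := exists_lt_of_csInf_lt ⟨hC.choose, hC.choose_spec⟩ hlt
  exact hb.2.mono hblt.le

lemma exists_matches_polyline (n m : ℕ) (v w : ℕ → E) :
    ∃ C, 0 ≤ C ∧ Matches (polyline n v) (polyline m w) C := by
  refine ⟨(∑ k ∈ Finset.range (n+1), ‖v k‖) + (∑ k ∈ Finset.range (m+1), ‖w k‖),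
    by positivity, id, id, isReparam_id, isReparam_id, fun s hs => ?_⟩
  refine (dist_le_norm_add_norm _ _).trans ?_
  exact add_le_add (polyline_norm_le n v s hs.1 hs.2) (polyline_norm_le m w s hs.1 hs.2)

-- ramp

def ramp (a μ : ℝ) (u : ℝ) : ℝ := u + max (u - a) 0 * μ

lemma ramp_continuous (a μ : ℝ) : Continuous (ramp a μ) := by
  unfold ramp; fun_prop

lemma ramp_monotone (a : ℝ) {μ : ℝ} (hμ : 0 ≤ μ) : Monotone (ramp a μ) := by
  intro x y hxy
  unfold ramp
  have : max (x - a) 0 ≤ max (y - a) 0 := max_le_max (by linarith) le_rfl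
  nlinarith

lemma ramp_of_le {a u : ℝ} (μ : ℝ) (h : u ≤ a) : ramp a μ u = u := by
  unfold ramp
  rw [max_eq_right (by linarith)]; ring

lemma ramp_of_ge {a u : ℝ} (μ : ℝ) (h : a ≤ u) : ramp a μ u = u + (u - a) * μ := by
  unfold ramp
  rw [max_eq_left (by linarith)]

lemma monotone_piece {c : ℝ} {f g : ℝ → ℝ} (hf : Monotone f) (hg : Monotone g)
    (hfg : f c = g c) : Monotone (fun r => if r ≤ c then f r else g r) := by
  intro x y hxy
  by_cases hx : x ≤ c <;> by_cases hy : y ≤ c <;> simp only [hx, hy, if_pos, if_neg, if_true, if_false]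
  · exact hf hxy
  · exact (hf hx).trans (hfg ▸ hg (le_of_not_ge hy))
  · exact absurd (hxy.trans hy) hx
  · exact hg hxy

-- Master cut lemma

lemma matches_cut {f g P Q : ℝ → E} {δ : ℝ} {φ ψ : ℝ → ℝ}
    (hφ : IsReparam φ) (hψ : IsReparam ψ)
    (hd : ∀ s ∈ Set.Icc (0:ℝ) 1, dist (f (φ s)) (g (ψ s)) ≤ δ)
    {s₀ : ℝ} (hs₀ : s₀ ∈ Set.Icc (0:ℝ) 1)
    {ρ₁ ρ₂ : ℝ → ℝ} {q₁ q₂ : ℝ}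
    (c₁ : Continuous ρ₁) (m₁ : Monotone ρ₁) (z₁ : ρ₁ 0 = 0)
    (e₁ : ρ₁ (φ s₀) = q₁) (l₁ : q₁ ≤ 1)
    (k₁ : ∀ r, q₁ ≤ r → r ≤ 1 → P r = P q₁)
    (f₁ : ∀ u, 0 ≤ u → u ≤ φ s₀ → P (ρ₁ u) = f u)
    (c₂ : Continuous ρ₂) (m₂ : Monotone ρ₂) (z₂ : ρ₂ 0 = 0)
    (e₂ : ρ₂ (ψ s₀) = q₂) (l₂ : q₂ ≤ 1)
    (k₂ : ∀ r, q₂ ≤ r → r ≤ 1 → Q r = Q q₂)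
    (f₂ : ∀ u, 0 ≤ u → u ≤ ψ s₀ → Q (ρ₂ u) = g u) :
    Matches P Q δ := by
  obtain ⟨hφc, hφm, hφ0, hφ1⟩ := hφ
  obtain ⟨hψc, hψm, hψ0, hψ1⟩ := hψ
  have hs00 := hs₀.1
  have hs01 := hs₀.2
  have hφs₀0 : 0 ≤ φ s₀ := hφ0 ▸ hφm hs00
  have hψs₀0 : 0 ≤ ψ s₀ := hψ0 ▸ hψm hs00
  set Φ : ℝ → ℝ := fun r => if r ≤ 1/2 then ρ₁ (φ (2*r*s₀)) else q₁ + (2*r-1)*(1-q₁) with hΦ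
  set Ψ : ℝ → ℝ := fun r => if r ≤ 1/2 then ρ₂ (ψ (2*r*s₀)) else q₂ + (2*r-1)*(1-q₂) with hΨ
  have hagree1 : ρ₁ (φ (2*(1/2:ℝ)*s₀)) = q₁ + (2*(1/2:ℝ)-1)*(1-q₁) := by
    rw [show 2*(1/2:ℝ)*s₀ = s₀ by ring, e₁]; ring
  have hagree2 : ρ₂ (ψ (2*(1/2:ℝ)*s₀)) = q₂ + (2*(1/2:ℝ)-1)*(1-q₂) := by
    rw [show 2*(1/2:ℝ)*s₀ = s₀ by ring, e₂]; ring
  have hmono1 : Monotone (fun r : ℝ => ρ₁ (φ (2*r*s₀))) := by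
    intro x y hxy; exact m₁ (hφm (by nlinarith))
  have hmono2 : Monotone (fun r : ℝ => ρ₂ (ψ (2*r*s₀))) := by
    intro x y hxy; exact m₂ (hψm (by nlinarith))
  have hmonoB1 : Monotone (fun r : ℝ => q₁ + (2*r-1)*(1-q₁)) := by
    intro x y hxy; dsimp only
    nlinarith [mul_nonneg (sub_nonneg.mpr hxy) (sub_nonneg.mpr l₁)]
  have hmonoB2 : Monotone (fun r : ℝ => q₂ + (2*r-1)*(1-q₂)) := by
    intro x y hxy; dsimp only
    nlinarith [mul_nonneg (sub_nonneg.mpr hxy) (sub_nonneg.mpr l₂)]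
  refine ⟨Φ, Ψ, ⟨?_, ?_, ?_, ?_⟩, ⟨?_, ?_, ?_, ?_⟩, ?_⟩
  · exact Continuous.if_le (by fun_prop) (by fun_prop) continuous_id continuous_const
      (fun x hx => by rw [hx]; exact hagree1)
  · exact monotone_piece hmono1 hmonoB1 hagree1
  · rw [hΦ]; norm_num [hφ0, z₁]
  · rw [hΦ]; norm_num
  · exact Continuous.if_le (by fun_prop) (by fun_prop) continuous_id continuous_const
      (fun x hx => by rw [hx]; exact hagree2)
  · exact monotone_piece hmono2 hmonoB2 hagree2
  · rw [hΨ]; norm_num [hψ0, z₂]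
  · rw [hΨ]; norm_num
  · intro r hr
    by_cases hr2 : r ≤ 1/2
    · simp only [hΦ, hΨ, if_pos hr2]
      have hu0 : 0 ≤ 2*r*s₀ := by nlinarith [hr.1]
      have hus : 2*r*s₀ ≤ s₀ := by nlinarith [hr.1]
      have hu1 : 2*r*s₀ ≤ 1 := hus.trans hs01
      rw [f₁ _ (hφ0 ▸ hφm hu0) (hφm hus), f₂ _ (hψ0 ▸ hψm hu0) (hψm hus)]
      exact hd _ ⟨hu0, hu1⟩
    · simp only [hΦ, hΨ, if_neg hr2]
      push_neg at hr2
      have h1 : q₁ ≤ q₁ + (2*r-1)*(1-q₁) := by nlinarith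
      have h2 : q₁ + (2*r-1)*(1-q₁) ≤ 1 := by nlinarith [hr.2]
      have h3 : q₂ ≤ q₂ + (2*r-1)*(1-q₂) := by nlinarith
      have h4 : q₂ + (2*r-1)*(1-q₂) ≤ 1 := by nlinarith [hr.2]
      rw [k₁ _ h1 h2, k₂ _ h3 h4, ← e₁, ← e₂,
          f₁ _ hφs₀0 le_rfl, f₂ _ hψs₀0 le_rfl]
      exact hd s₀ hs₀

lemma two_point_combo (p q : E) (cc cx c₂ : ℝ) (h : cc * cx = c₂) :
    (1 - cc) • p + cc • ((1 - cx) • p + cx • q) = (1 - c₂) • p + c₂ • q := by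
  rw [← h, smul_add, smul_smul, smul_smul, ← add_assoc, ← add_smul]
  congr 1
  ring

lemma fd_lastVertex_le (m : ℕ) (wv : ℕ → E) (y₁ y₂ : E) (Q : ℝ → E)
    (hQ : ∃ C, 0 ≤ C ∧ Matches (polyline (m+1) (subVert wv m y₂)) Q C) :
    frechetDist (polyline (m+1) (subVert wv m y₁)) Q ≤
      frechetDist (polyline (m+1) (subVert wv m y₂)) Q + dist y₁ y₂ := by
  obtain ⟨C, hC0, hCM⟩ := hQ
  have hkey : ∀ b, 0 ≤ b → Matches (polyline (m+1) (subVert wv m y₂)) Q b →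
      frechetDist (polyline (m+1) (subVert wv m y₁)) Q ≤ b + dist y₁ y₂ := by
    intro b hb0 hbM
    obtain ⟨φ, ψ, h1, h2, h3⟩ := hbM
    refine fd_le_of_matches ⟨φ, ψ, h1, h2, fun s hs => ?_⟩ (by positivity)
    calc dist (polyline (m+1) (subVert wv m y₁) (φ s)) (Q (ψ s))
        ≤ dist (polyline (m+1) (subVert wv m y₁) (φ s)) (polyline (m+1) (subVert wv m y₂) (φ s))
          + dist (polyline (m+1) (subVert wv m y₂) (φ s)) (Q (ψ s)) := dist_triangle _ _ _
      _ ≤ dist y₁ y₂ + b := add_le_add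
          (polyline_lastVertex_dist m wv y₁ y₂ (φ s) (h1.mem_Icc hs).1 (h1.mem_Icc hs).2)
          (h3 s hs)
      _ = b + dist y₁ y₂ := by ring
  have h2 : frechetDist (polyline (m+1) (subVert wv m y₁)) Q - dist y₁ y₂ ≤
      frechetDist (polyline (m+1) (subVert wv m y₂)) Q := by
    rw [frechetDist_eq (polyline (m+1) (subVert wv m y₂)) Q]
    refine le_csInf ⟨C, hC0, hCM⟩ (fun b hb => ?_)
    have := hkey b hb.1 hb.2
    linarith
  linarith

lemma exists_hit {φ : ℝ → ℝ} (hφ : IsReparam φ) {a : ℝ} (h0 : 0 ≤ a) (h1 : a ≤ 1) :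
    ∃ s₀ ∈ Set.Icc (0:ℝ) 1, φ s₀ = a ∧ ∀ s ∈ Set.Icc (0:ℝ) 1, φ s ≤ a → s ≤ s₀ := by
  obtain ⟨hc, hm, hz, ho⟩ := hφ
  set T := {s : ℝ | s ∈ Set.Icc (0:ℝ) 1 ∧ φ s ≤ a} with hT
  have hTclosed : IsClosed T := by
    have hTeq : T = Set.Icc 0 1 ∩ φ ⁻¹' (Set.Iic a) := by
      ext s; simp [hT, Set.mem_Icc, and_assoc]
    rw [hTeq]; exact isClosed_Icc.inter (isClosed_Iic.preimage hc)
  have hTne : T.Nonempty := ⟨0, ⟨le_rfl, zero_le_one⟩, by rw [hz]; exact h0⟩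
  have hTbdd : BddAbove T := ⟨1, fun s hs => hs.1.2⟩
  have hmem := hTclosed.csSup_mem hTne hTbdd
  refine ⟨sSup T, hmem.1, ?_, fun s hs hφs => le_csSup hTbdd ⟨hs, hφs⟩⟩
  refine le_antisymm hmem.2 ?_
  rcases eq_or_lt_of_le hmem.1.2 with h1' | h1'
  · rw [h1', ho]; exact h1
  · refine ge_of_tendsto (hc.continuousWithinAt (s := Set.Ioi (sSup T))) ?_
    filter_upwards [Ioo_mem_nhdsGT_of_mem ⟨le_refl (sSup T), h1'⟩] with s hs'
    by_contra hcon
    push_neg at hcon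
    have hsT : s ∈ T := ⟨⟨hmem.1.1.trans hs'.1.le, hs'.2.le⟩, hcon.le⟩
    exact absurd (le_csSup hTbdd hsT) (not_le.mpr hs'.1)

end Aux

set_option maxHeartbeats 1000000 in
/-- parameterize the edge `w j w(j+1)` by `t ∈ [0,1]`. Let `R` be the
parameter set of the reachability interval `R_i[j]` and `R1` that of `R_{i+1}[j]`.
If `R'_j[i] = ∅` and both `R` and `R1` are nonempty, then the first point of
`R_{i+1}[j]` does not lie in front of the first point of `R_i[j]`, i.e.
`sInf R ≤ sInf R1`. -/
theorem first_point_monotone {d : ℕ} (v w : ℕ → EuclideanSpace ℝ (Fin d))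
    (i j : ℕ) (δ : ℝ)
    (hR'empty : ∀ x ∈ segment ℝ (v i) (v (i+1)),
        ¬ frechetDist (polyline (i+1) (subVert v i x)) (polyline j w) ≤ δ)
    (R R1 : Set ℝ)
    (hR : R = {t : ℝ | t ∈ Set.Icc (0:ℝ) 1 ∧
      frechetDist (polyline i v)
        (polyline (j+1) (subVert w j ((1-t) • w j + t • w (j+1)))) ≤ δ})
    (hR1 : R1 = {t : ℝ | t ∈ Set.Icc (0:ℝ) 1 ∧
      frechetDist (polyline (i+1) v)
        (polyline (j+1) (subVert w j ((1-t) • w j + t • w (j+1)))) ≤ δ})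
    (hne : R.Nonempty) (hne1 : R1.Nonempty) :
    sInf R ≤ sInf R1 := by
  have key : ∀ t ∈ R1, sInf R ≤ t := by
    intro t htR1
    rw [hR1] at htR1
    obtain ⟨⟨ht0, ht1⟩, hft⟩ := htR1
    set yy : ℝ → EuclideanSpace ℝ (Fin d) := fun r => (1-r) • w j + r • w (j+1) with hyy
    set F : ℝ → ℝ := fun r =>
      frechetDist (polyline i v) (polyline (j+1) (subVert w j (yy r))) with hF
    have hδ0 : 0 ≤ δ :=
      le_trans (fd_nonneg (exists_matches_polyline (i+1) (j+1) v (subVert w j (yy t)))) hft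
    -- the function G and its minimum on the segment
    set G : EuclideanSpace ℝ (Fin d) → ℝ := fun x =>
      frechetDist (polyline (i+1) (subVert v i x)) (polyline j w) with hG
    have hGlip : ∀ x y, G x ≤ G y + dist x y := by
      intro x y
      exact fd_lastVertex_le i v x y (polyline j w) (exists_matches_polyline (i+1) j _ w)
    have hGcont : Continuous G := by
      refine (LipschitzWith.of_dist_le_mul (K := 1) (f := G) ?_).continuous
      intro x y
      rw [NNReal.coe_one, one_mul, Real.dist_eq, abs_sub_le_iff]
      constructor
      · linarith [hGlip x y]
      · have h2 := hGlip y x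
        rw [dist_comm y x] at h2
        linarith
    have hKcomp : IsCompact (segment ℝ (v i) (v (i+1))) := by
      rw [segment_eq_image]
      exact isCompact_Icc.image (by fun_prop)
    obtain ⟨x₀, hx₀K, hx₀min⟩ :=
      hKcomp.exists_isMinOn ⟨v i, left_mem_segment ℝ _ _⟩ hGcont.continuousOn
    have hη : δ < G x₀ := not_le.mp (hR'empty x₀ hx₀K)
    -- main claim
    have claim : ∀ ε, 0 < ε → δ + ε < G x₀ → ∃ r, 0 ≤ r ∧ r ≤ t ∧ F r ≤ δ + ε := by
      intro ε hε hεG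
      obtain ⟨φ, ψ, hφ, hψ, hd⟩ :=
        matches_of_fd_le (exists_matches_polyline (i+1) (j+1) v (subVert w j (yy t))) hft hε
      set a : ℝ := (i:ℝ)/((i:ℝ)+1) with ha
      set b : ℝ := (j:ℝ)/((j:ℝ)+1) with hb
      have hip : (0:ℝ) < (i:ℝ)+1 := by positivity
      have hjp : (0:ℝ) < (j:ℝ)+1 := by positivity
      have ha0 : 0 ≤ a := by positivity
      have ha1 : a < 1 := by rw [ha, div_lt_one hip]; linarith
      have hai : a * ((i:ℝ)+1) = i := by rw [ha]; field_simp
      have hb0 : 0 ≤ b := by positivity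
      have hb1 : b < 1 := by rw [hb, div_lt_one hjp]; linarith
      have hbj : b * ((j:ℝ)+1) = j := by rw [hb]; field_simp
      obtain ⟨sb, hsbI, hψsb, hsbmax⟩ := exists_hit hψ hb0 hb1.le
      by_cases hca : a ≤ φ sb
      · -- Case A : contradiction with minimality of G on the segment
        exfalso
        have hcI : φ sb ∈ Set.Icc (0:ℝ) 1 := hφ.mem_Icc hsbI
        set c := φ sb with hcdef
        set cx : ℝ := c * ((i:ℝ)+1) - i with hcx
        have hcx0 : 0 ≤ cx := by rw [hcx, ← hai]; nlinarith [mul_le_mul_of_nonneg_right hca hip.le]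
        have hcx1 : cx ≤ 1 := by rw [hcx]; nlinarith [mul_le_mul_of_nonneg_right hcI.2 hip.le]
        set x : EuclideanSpace ℝ (Fin d) := (1-cx) • v i + cx • v (i+1) with hxdef
        have hxseg : x ∈ segment ℝ (v i) (v (i+1)) :=
          ⟨1-cx, cx, by linarith, hcx0, by ring, rfl⟩
        have hMA : Matches (polyline (i+1) (subVert v i x)) (polyline j w) (δ+ε) := by
          have hpref : ∀ u, 0 ≤ u → u ≤ a →
              polyline (i+1) (subVert v i x) u = polyline (i+1) v u := by
            intro u h0 h1
            refine polyline_prefix_congr i (subVert v i x) v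
              (fun k hk => subVert_le v i x k hk) u h0 ?_
            calc u * ((i:ℝ)+1) ≤ a * ((i:ℝ)+1) := mul_le_mul_of_nonneg_right h1 hip.le
              _ = i := hai
          have hlastP : ∀ r, a ≤ r → r ≤ 1 → polyline (i+1) (subVert v i x) r
              = (1 - (r*((i:ℝ)+1) - i)) • v i + (r*((i:ℝ)+1) - i) • x := by
            intro r h1 h2
            rw [polyline_last i (subVert v i x) r
              (by calc (i:ℝ) = a*((i:ℝ)+1) := hai.symm
                    _ ≤ r*((i:ℝ)+1) := mul_le_mul_of_nonneg_right h1 hip.le)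
              (by nlinarith [mul_le_mul_of_nonneg_right h2 hip.le]),
              subVert_le v i x i le_rfl, subVert_last]
          have hlastf : ∀ r, a ≤ r → r ≤ 1 → polyline (i+1) v r
              = (1 - (r*((i:ℝ)+1) - i)) • v i + (r*((i:ℝ)+1) - i) • v (i+1) := by
            intro r h1 h2
            exact polyline_last i v r
              (by calc (i:ℝ) = a*((i:ℝ)+1) := hai.symm
                    _ ≤ r*((i:ℝ)+1) := mul_le_mul_of_nonneg_right h1 hip.le)
              (by nlinarith [mul_le_mul_of_nonneg_right h2 hip.le])
          obtain ⟨ρ₁, q₁, hc₁, hm₁, hz₁, he₁, hl₁, hk₁, hf₁⟩ :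
              ∃ ρ₁ q₁, Continuous ρ₁ ∧ Monotone ρ₁ ∧ ρ₁ 0 = 0 ∧ ρ₁ (φ sb) = q₁ ∧ q₁ ≤ 1 ∧
                (∀ r, q₁ ≤ r → r ≤ 1 →
                  polyline (i+1) (subVert v i x) r = polyline (i+1) (subVert v i x) q₁) ∧
                (∀ u, 0 ≤ u → u ≤ φ sb →
                  polyline (i+1) (subVert v i x) (ρ₁ u) = polyline (i+1) v u) := by
            rcases eq_or_lt_of_le hca with hceq | hclt
            · have hxvi : x = v i := by
                have hcx0' : cx = 0 := by rw [hcx, ← hceq, hai]; ring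
                rw [hxdef, hcx0']; norm_num
              have hconst : ∀ r, a ≤ r → r ≤ 1 →
                  polyline (i+1) (subVert v i x) r = v i := by
                intro r h1 h2
                rw [hlastP r h1 h2, hxvi, ← add_smul]
                norm_num
              refine ⟨ramp a 0, a, ramp_continuous a 0, ramp_monotone a le_rfl,
                ramp_of_le 0 ha0, ?_, ha1.le, ?_, ?_⟩
              · rw [show ramp a 0 c = c from ramp_of_le 0 hceq.ge]
                exact hceq.symm
              · intro r h1 h2
                rw [hconst r h1 h2, hconst a le_rfl ha1.le]
              · intro u h0 h1
                have hua : u ≤ a := h1.trans hceq.ge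
                rw [ramp_of_le 0 hua]
                exact hpref u h0 hua
            · have hcane : c - a ≠ 0 := ne_of_gt (sub_pos.mpr hclt)
              set μ := (1-a)/(c-a) - 1 with hμdef
              have hμ0 : 0 ≤ μ := by
                rw [hμdef]
                have h := (one_le_div (sub_pos.mpr hclt)).mpr
                  (by linarith [hcI.2] : c - a ≤ 1 - a)
                linarith
              have hμc : (c-a) * μ = (1-a) - (c-a) := by
                rw [hμdef]; field_simp
              have heρ : ramp a μ c = 1 := by
                rw [ramp_of_ge μ hca]; linarith [hμc]
              refine ⟨ramp a μ, 1, ramp_continuous a μ, ramp_monotone a hμ0,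
                ramp_of_le μ ha0, heρ, le_rfl, ?_, ?_⟩
              · intro r h1 h2; rw [le_antisymm h2 h1]
              · intro u h0 h1
                by_cases hu : u ≤ a
                · rw [ramp_of_le μ hu]; exact hpref u h0 hu
                · push_neg at hu
                  have hρua : a ≤ ramp a μ u := by
                    have hh := ramp_monotone a hμ0 hu.le
                    rwa [ramp_of_le μ le_rfl] at hh
                  have hρu1 : ramp a μ u ≤ 1 := by
                    have hh := ramp_monotone a hμ0 h1
                    rwa [heρ] at hh
                  rw [hlastP _ hρua hρu1, hlastf u hu.le (h1.trans hcI.2), hxdef]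
                  refine two_point_combo (v i) (v (i+1)) _ _ _ ?_
                  have hcx2 : cx = (c-a)*((i:ℝ)+1) := by
                    have hh : (c-a)*((i:ℝ)+1) = c*((i:ℝ)+1) - a*((i:ℝ)+1) := by ring
                    rw [hcx, hh, hai]
                  have h1a : (1-a)*((i:ℝ)+1) = 1 := by
                    have hh : (1-a)*((i:ℝ)+1) = ((i:ℝ)+1) - a*((i:ℝ)+1) := by ring
                    rw [hh, hai]; ring
                  rw [ramp_of_ge μ hu.le, hcx2]
                  linear_combination ((c-a)*((i:ℝ)+1) - 1) * hai
                    + ((u-a)*((i:ℝ)+1)) * h1a + ((u-a)*((i:ℝ)+1)^2) * hμc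
          obtain ⟨ρ₂, q₂, hc₂, hm₂, hz₂, he₂, hl₂, hk₂, hf₂⟩ :
              ∃ ρ₂ q₂, Continuous ρ₂ ∧ Monotone ρ₂ ∧ ρ₂ 0 = 0 ∧ ρ₂ (ψ sb) = q₂ ∧ q₂ ≤ 1 ∧
                (∀ r, q₂ ≤ r → r ≤ 1 → polyline j w r = polyline j w q₂) ∧
                (∀ u, 0 ≤ u → u ≤ ψ sb →
                  polyline j w (ρ₂ u) = polyline (j+1) (subVert w j (yy t)) u) := by
            rcases Nat.eq_zero_or_pos j with hj0 | hj1
            · subst hj0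
              have hbz : b = 0 := by rw [hb]; norm_num
              refine ⟨ramp 0 0, 0, ramp_continuous 0 0, ramp_monotone 0 le_rfl,
                ramp_of_le 0 le_rfl, ?_, zero_le_one, ?_, ?_⟩
              · rw [hψsb, hbz, ramp_of_le 0 le_rfl]
              · intro r _ _
                rw [polyline_zero_edges, polyline_zero_edges]
              · intro u h0 h1
                rw [hψsb, hbz] at h1
                have hu0 : u = 0 := le_antisymm h1 h0
                subst hu0
                rw [ramp_of_le 0 le_rfl, polyline_zero_edges, polyline_at_zero,
                  subVert_le w 0 _ 0 le_rfl]
            · have hjne : (j:ℝ) ≠ 0 := by positivity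
              have heρ2 : ramp 0 (1/(j:ℝ)) b = 1 := by
                rw [ramp_of_ge _ hb0, hb]; field_simp; ring
              refine ⟨ramp 0 (1/(j:ℝ)), 1, ramp_continuous _ _,
                ramp_monotone 0 (by positivity), ramp_of_le _ le_rfl,
                by rw [hψsb]; exact heρ2, le_rfl, ?_, ?_⟩
              · intro r h1 h2; rw [le_antisymm h2 h1]
              · intro u h0 h1
                rw [hψsb] at h1
                have hresc := polyline_prefix_rescale j hj1 (subVert w j (yy t)) w
                  (fun k hk => subVert_le w j _ k hk) u h0
                  (by calc u*((j:ℝ)+1) ≤ b*((j:ℝ)+1) := mul_le_mul_of_nonneg_right h1 hjp.le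
                    _ = j := hbj)
                rw [hresc]
                congr 1
                rw [ramp_of_ge _ h0]
                field_simp
                ring
          exact matches_cut hφ hψ hd hsbI hc₁ hm₁ hz₁ he₁ hl₁ hk₁ hf₁
            hc₂ hm₂ hz₂ he₂ hl₂ hk₂ hf₂
        have hGx : G x ≤ δ + ε := fd_le_of_matches hMA (by linarith)
        have hGmin : G x₀ ≤ G x := (isMinOn_iff.mp hx₀min) x hxseg
        linarith
      · -- Case B
        push_neg at hca
        obtain ⟨sa, hsaI, hφsa, hsamax⟩ := exists_hit hφ ha0 ha1.le
        have hUb : b < ψ sa := by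
          by_contra hcon
          push_neg at hcon
          have hle : sa ≤ sb := hsbmax sa hsaI hcon
          have := hφ.2.1 hle
          rw [hφsa] at this
          linarith
        set U := ψ sa with hU
        have hUI : U ∈ Set.Icc (0:ℝ) 1 := hψ.mem_Icc hsaI
        set κ : ℝ := U * ((j:ℝ)+1) - j with hκ
        have hκ0 : 0 < κ := by rw [hκ, ← hbj]; nlinarith [mul_pos (sub_pos.mpr hUb) hjp]
        have hκ1 : κ ≤ 1 := by rw [hκ]; nlinarith [mul_le_mul_of_nonneg_right hUI.2 hjp.le]
        refine ⟨t*κ, mul_nonneg ht0 hκ0.le, mul_le_of_le_one_right ht0 hκ1, ?_⟩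
        have hMB : Matches (polyline i v) (polyline (j+1) (subVert w j (yy (t*κ)))) (δ+ε) := by
          obtain ⟨ρ₁, q₁, hc₁, hm₁, hz₁, he₁, hl₁, hk₁, hf₁⟩ :
              ∃ ρ₁ q₁, Continuous ρ₁ ∧ Monotone ρ₁ ∧ ρ₁ 0 = 0 ∧ ρ₁ (φ sa) = q₁ ∧ q₁ ≤ 1 ∧
                (∀ r, q₁ ≤ r → r ≤ 1 → polyline i v r = polyline i v q₁) ∧
                (∀ u, 0 ≤ u → u ≤ φ sa → polyline i v (ρ₁ u) = polyline (i+1) v u) := by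
            rcases Nat.eq_zero_or_pos i with hi0 | hi1
            · subst hi0
              have haz : a = 0 := by rw [ha]; norm_num
              refine ⟨ramp 0 0, 0, ramp_continuous 0 0, ramp_monotone 0 le_rfl,
                ramp_of_le 0 le_rfl, ?_, zero_le_one, ?_, ?_⟩
              · rw [hφsa, haz, ramp_of_le 0 le_rfl]
              · intro r _ _
                rw [polyline_zero_edges, polyline_zero_edges]
              · intro u h0 h1
                rw [hφsa, haz] at h1
                have hu0 : u = 0 := le_antisymm h1 h0
                subst hu0
                rw [ramp_of_le 0 le_rfl, polyline_zero_edges, polyline_at_zero]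
            · have hine : (i:ℝ) ≠ 0 := Nat.cast_ne_zero.mpr hi1.ne'
              have heρ1 : ramp 0 (1/(i:ℝ)) a = 1 := by
                rw [ramp_of_ge _ ha0, ha]; field_simp; ring
              refine ⟨ramp 0 (1/(i:ℝ)), 1, ramp_continuous _ _,
                ramp_monotone 0 (by positivity), ramp_of_le _ le_rfl,
                by rw [hφsa]; exact heρ1, le_rfl, ?_, ?_⟩
              · intro r h1 h2; rw [le_antisymm h2 h1]
              · intro u h0 h1
                rw [hφsa] at h1
                have hresc := polyline_prefix_rescale i hi1 v v (fun k _ => rfl) u h0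
                  (by calc u*((i:ℝ)+1) ≤ a*((i:ℝ)+1) := mul_le_mul_of_nonneg_right h1 hip.le
                    _ = i := hai)
                rw [hresc]
                congr 1
                rw [ramp_of_ge _ h0]
                field_simp
                ring
          have hUbne : U - b ≠ 0 := ne_of_gt (sub_pos.mpr hUb)
          set ν := (1-b)/(U-b) - 1 with hν
          have hν0 : 0 ≤ ν := by
            rw [hν]
            have h := (one_le_div (sub_pos.mpr hUb)).mpr (by linarith [hUI.2] : U - b ≤ 1 - b)
            linarith
          have hνc : (U-b) * ν = (1-b) - (U-b) := by rw [hν]; field_simp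
          have heρ2 : ramp b ν U = 1 := by rw [ramp_of_ge ν hUb.le]; linarith [hνc]
          have hprefQ : ∀ u, 0 ≤ u → u ≤ b →
              polyline (j+1) (subVert w j (yy (t*κ))) u
                = polyline (j+1) (subVert w j (yy t)) u := by
            intro u h0 h1
            refine polyline_prefix_congr j _ _
              (fun k hk => by rw [subVert_le w j _ k hk, subVert_le w j _ k hk]) u h0 ?_
            calc u*((j:ℝ)+1) ≤ b*((j:ℝ)+1) := mul_le_mul_of_nonneg_right h1 hjp.le
              _ = j := hbj
          have hlastQ : ∀ (z : EuclideanSpace ℝ (Fin d)) r, b ≤ r → r ≤ 1 →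
              polyline (j+1) (subVert w j z) r
                = (1 - (r*((j:ℝ)+1) - j)) • w j + (r*((j:ℝ)+1) - j) • z := by
            intro z r h1 h2
            rw [polyline_last j (subVert w j z) r
              (by calc (j:ℝ) = b*((j:ℝ)+1) := hbj.symm
                    _ ≤ r*((j:ℝ)+1) := mul_le_mul_of_nonneg_right h1 hjp.le)
              (by nlinarith [mul_le_mul_of_nonneg_right h2 hjp.le]),
              subVert_le w j z j le_rfl, subVert_last]
          refine matches_cut hφ hψ hd hsaI hc₁ hm₁ hz₁ he₁ hl₁ hk₁ hf₁
            (ramp_continuous b ν) (ramp_monotone b hν0) (ramp_of_le ν hb0)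
            heρ2 le_rfl (fun r h1 h2 => by rw [le_antisymm h2 h1]) ?_
          intro u h0 h1
          by_cases hub : u ≤ b
          · rw [ramp_of_le ν hub]; exact hprefQ u h0 hub
          · push_neg at hub
            have h2a : b ≤ ramp b ν u := by
              have hh := ramp_monotone b hν0 hub.le
              rwa [ramp_of_le ν le_rfl] at hh
            have h2b : ramp b ν u ≤ 1 := by
              have hh := ramp_monotone b hν0 h1
              rwa [heρ2] at hh
            rw [hlastQ _ _ h2a h2b, hlastQ _ u hub.le (h1.trans hUI.2)]
            simp only [hyy]
            rw [two_point_combo (w j) (w (j+1)) (ramp b ν u * ((j:ℝ)+1) - j) (t*κ) _ rfl,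
                two_point_combo (w j) (w (j+1)) (u * ((j:ℝ)+1) - j) t _ rfl]
            have hκ2 : κ = (U-b)*((j:ℝ)+1) := by
              have hh : (U-b)*((j:ℝ)+1) = U*((j:ℝ)+1) - b*((j:ℝ)+1) := by ring
              rw [hκ, hh, hbj]
            have h1b : (1-b)*((j:ℝ)+1) = 1 := by
              have hh : (1-b)*((j:ℝ)+1) = ((j:ℝ)+1) - b*((j:ℝ)+1) := by ring
              rw [hh, hbj]; ring
            have hccκ : (ramp b ν u * ((j:ℝ)+1) - j) * κ = u*((j:ℝ)+1) - j := by
              rw [ramp_of_ge ν hub.le, hκ2]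
              linear_combination ((U-b)*((j:ℝ)+1) - 1) * hbj
                + ((u-b)*((j:ℝ)+1)) * h1b + ((u-b)*((j:ℝ)+1)^2) * hνc
            have hfin : (ramp b ν u * ((j:ℝ)+1) - j) * (t*κ) = (u*((j:ℝ)+1) - j) * t := by
              rw [← hccκ]; ring
            rw [hfin]
        exact fd_le_of_matches hMB (by linarith)
    -- conclude using continuity of F and compactness of [0, t]
    have hFlip : ∀ y₁ y₂, frechetDist (polyline i v) (polyline (j+1) (subVert w j y₁)) ≤
        frechetDist (polyline i v) (polyline (j+1) (subVert w j y₂)) + dist y₁ y₂ := by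
      intro y₁ y₂
      rw [fd_comm (polyline i v), fd_comm (polyline i v)]
      exact fd_lastVertex_le j w y₁ y₂ (polyline i v)
        ⟨_, (exists_matches_polyline (j+1) i (subVert w j y₂) v).choose_spec.1,
          (exists_matches_polyline (j+1) i (subVert w j y₂) v).choose_spec.2⟩
    have hFcont : Continuous F := by
      have hH : Continuous (fun y : EuclideanSpace ℝ (Fin d) =>
          frechetDist (polyline i v) (polyline (j+1) (subVert w j y))) := by
        refine (LipschitzWith.of_dist_le_mul (K := 1) ?_).continuous
        intro y₁ y₂
        rw [NNReal.coe_one, one_mul, Real.dist_eq, abs_sub_le_iff]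
        exact ⟨by linarith [hFlip y₁ y₂], by linarith [hFlip y₂ y₁, dist_comm y₁ y₂]⟩
      have hyyc : Continuous yy := by
        rw [hyy]; fun_prop
      exact hH.comp hyyc
    obtain ⟨r₀, hr₀I, hr₀min⟩ :=
      (isCompact_Icc (a := (0:ℝ)) (b := t)).exists_isMinOn ⟨0, le_rfl, ht0⟩ hFcont.continuousOn
    have hFr₀ : F r₀ ≤ δ := by
      by_contra hcon
      push_neg at hcon
      have hεpos : 0 < min ((G x₀ - δ)/2) ((F r₀ - δ)/2) := by
        apply lt_min <;> linarith
      obtain ⟨r, hr0, hrt, hrF⟩ := claim _ hεpos (by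
        have := min_le_left ((G x₀ - δ)/2) ((F r₀ - δ)/2); linarith)
      have : F r₀ ≤ F r := (isMinOn_iff.mp hr₀min) r ⟨hr0, hrt⟩
      have := min_le_right ((G x₀ - δ)/2) ((F r₀ - δ)/2)
      linarith
    have hr₀R : r₀ ∈ R := by
      rw [hR]
      exact ⟨⟨hr₀I.1, hr₀I.2.trans ht1⟩, hFr₀⟩
    calc sInf R ≤ r₀ := csInf_le ⟨0, fun s hs => by rw [hR] at hs; exact hs.1.1⟩ hr₀R
      _ ≤ t := hr₀I.2
  exact le_csInf hne1 key
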